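/- arXiv:2003.08819 — 4 statements merged into one kernel-verified Lean document; each statement's English description precedes it below -/
import Mathlib

section
/- (Inverse Yau twist.) Let (A, m, α, β, e) be a unital BiHom-monoid such that α and β are bijective. Then x * y := m (α⁻¹ x) (β⁻¹ y) defines an associative multiplication on A with two-sided unit e, i.e. (A, *, e) is a monoid. -/
/-!
Since `α` and `β` are multiplicative, fix `e` and commute, so do their inverses. Expanding both
sides of the twisted associativity law with these facts turns it into the BiHom-associativity
`m (m a b) (β c) = m (α a) (m b c)` at `a = α⁻¹ (α⁻¹ x)`, `b = α⁻¹ (β⁻¹ y)`, `c = β⁻¹ (β⁻¹ z)`;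
the unit laws reduce to `m e x = β x` and `m x e = α x`.
-/

/-- A BiHom-semigroup structure on `A`. -/
def IsBiHomSemigroup {A : Type*} (m : A → A → A) (α β : A → A) : Prop :=
  α ∘ β = β ∘ α ∧
  (∀ x y, α (m x y) = m (α x) (α y)) ∧
  (∀ x y, β (m x y) = m (β x) (β y)) ∧
  (∀ x y z, m (m x y) (β z) = m (α x) (m y z))

/-- A unital BiHom-monoid structure on `A`. -/
def IsUnitalBiHomMonoid {A : Type*} (m : A → A → A) (α β : A → A) (e : A) : Prop :=
  IsBiHomSemigroup m α β ∧
  α e = e ∧ β e = e ∧ (∀ x, m e x = β x) ∧ (∀ x, m x e = α x)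

open Function

theorem Function.Semiconj₂.inverse_left {α β : Type*} {f : α → β} {f' : β → α}
    {ga : α → α → α} {gb : β → β → β} (h : Semiconj₂ f ga gb)
    (hf₁ : LeftInverse f' f) (hf₂ : RightInverse f' f) : Semiconj₂ f' gb ga := fun x y ↦ by
  rw [← hf₁.injective.eq_iff, h, hf₂, hf₂, hf₂]

section InverseYauTwist

variable {A : Type*} {m : A → A → A} {α β α' β' : A → A} {e : A}

def invYauTwist (m : A → A → A) (α' β' : A → A) (x y : A) : A :=
  m (α' x) (β' y)

theorem IsBiHomSemigroup.invYauTwist_assoc (h : IsBiHomSemigroup m α β)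
    (hα'l : LeftInverse α' α) (hα'r : RightInverse α' α)
    (hβ'l : LeftInverse β' β) (hβ'r : RightInverse β' β) (x y z : A) :
    invYauTwist m α' β' (invYauTwist m α' β' x y) z =
      invYauTwist m α' β' x (invYauTwist m α' β' y z) := by
  obtain ⟨hcomm, hαm, hβm, hassoc⟩ := h
  have hα'm : Semiconj₂ α' m m := Semiconj₂.inverse_left hαm hα'l hα'r
  have hβ'm : Semiconj₂ β' m m := Semiconj₂.inverse_left hβm hβ'l hβ'r
  have hαβ : Function.Commute α β := semiconj_iff_comp_eq.mpr hcomm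
  have hβ'α' : Function.Commute β' α' :=
    (hαβ.semiconj.inverse_left hα'l hα'r).commute.symm.semiconj.inverse_left hβ'l hβ'r
  calc m (α' (m (α' x) (β' y))) (β' z)
      = m (m (α' (α' x)) (α' (β' y))) (β (β' (β' z))) := by rw [hα'm.eq, hβ'r]
    _ = m (α (α' (α' x))) (m (α' (β' y)) (β' (β' z))) := hassoc _ _ _
    _ = m (α' x) (β' (m (α' y) (β' z))) := by rw [hα'r, hβ'm.eq, hβ'α'.eq]

theorem IsUnitalBiHomMonoid.invYauTwist_unit_left (h : IsUnitalBiHomMonoid m α β e)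
    (hα'l : LeftInverse α' α) (hβ'r : RightInverse β' β) (x : A) :
    invYauTwist m α' β' e x = x := by
  have hα'e : IsFixedPt α' e := IsFixedPt.to_leftInverse h.2.1 hα'l
  rw [invYauTwist, hα'e.eq, h.2.2.2.1, hβ'r]

theorem IsUnitalBiHomMonoid.invYauTwist_unit_right (h : IsUnitalBiHomMonoid m α β e)
    (hα'r : RightInverse α' α) (hβ'l : LeftInverse β' β) (x : A) :
    invYauTwist m α' β' x e = x := by
  have hβ'e : IsFixedPt β' e := IsFixedPt.to_leftInverse h.2.2.1 hβ'l
  rw [invYauTwist, hβ'e.eq, h.2.2.2.2, hα'r]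

end InverseYauTwist

theorem stmt_9 {A : Type*} (m : A → A → A) (α β : A → A) (e : A)
    (h : IsUnitalBiHomMonoid m α β e)
    (α' β' : A → A)
    (hα'l : Function.LeftInverse α' α) (hα'r : Function.RightInverse α' α)
    (hβ'l : Function.LeftInverse β' β) (hβ'r : Function.RightInverse β' β) :
    (∀ x y z, m (α' (m (α' x) (β' y))) (β' z) = m (α' x) (β' (m (α' y) (β' z)))) ∧
    (∀ x, m (α' e) (β' x) = x) ∧
    (∀ x, m (α' x) (β' e) = x) :=
  ⟨h.1.invYauTwist_assoc hα'l hα'r hβ'l hβ'r,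
    h.invYauTwist_unit_left hα'l hβ'r,
    h.invYauTwist_unit_right hα'r hβ'l⟩
end

section
/- (Generalized BiHom-associativity.) Let (A, m, α, β) be a BiHom-semigroup. Define the iterated product P : A → List A → A by P x [] = x and P x (y :: l) = m (α^(l.length) x) (P y l), where α^k denotes the k-fold iterate of α. Then for all x y : A and zs : List A, P x (y :: zs) = P (m x y) (zs.map β). -/
/-- Iterated BiHom-product: `P x [] = x`, `P x (y :: l) = m (α^[l.length] x) (P y l)`. -/
def iterProd {A : Type*} (m : A → A → A) (α : A → A) : A → List A → A
  | x, [] => x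
  | x, y :: l => m (α^[l.length] x) (iterProd m α y l)

open Function

theorem map_iterProd {A : Type*} {m : A → A → A} {α f : A → A} (hm : Semiconj₂ f m m)
    (hα : Function.Commute f α) (x : A) (l : List A) :
    f (iterProd m α x l) = iterProd m α (f x) (l.map f) := by
  induction l generalizing x with
  | nil => rfl
  | cons y l ih =>
    simp only [iterProd, List.map, List.length_map, hm.eq, (hα.iterate_right _).eq, ih]

/- With `n = zs.length - 1`, both sides reduce to the BiHom-associativity law applied to
`αⁿ x`, `αⁿ y` and the product of `zs`: the extra `α` on the left factor of the left side
matches the `β` that the right side puts on the last factor. -/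
theorem stmt_12 {A : Type*} (m : A → A → A) (α β : A → A)
    (h : IsBiHomSemigroup m α β) :
    ∀ (x y : A) (zs : List A),
      iterProd m α x (y :: zs) = iterProd m α (m x y) (zs.map β) := by
  obtain ⟨hcomm, hα, hβ, hassoc⟩ := h
  have hβα : Function.Commute β α := Function.Commute.symm (semiconj_iff_comp_eq.mpr hcomm)
  intro x y zs
  cases zs with
  | nil => rfl
  | cons z l =>
    calc iterProd m α x (y :: z :: l)
        = m (α (α^[l.length] x)) (m (α^[l.length] y) (iterProd m α z l)) := by
          rw [iterProd, iterProd, List.length_cons, iterate_succ_apply']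
      _ = m (m (α^[l.length] x) (α^[l.length] y)) (β (iterProd m α z l)) := (hassoc _ _ _).symm
      _ = iterProd m α (m x y) ((z :: l).map β) := by
          rw [map_iterProd hβ hβα, ← (Semiconj₂.iterate hα l.length).eq]
          simp only [List.map, iterProd, List.length_map]
end

section
/- (Categorical Yau twist.) Let C be a monoidal category, (M, μ, η) a monoid object in C, and f g : M ⟶ M morphisms of monoids (i.e. (f ⊗ f) ≫ μ = μ ≫ f, η ≫ f = η, and likewise for g) with f ≫ g = g ≫ f. Define μ' := (f ⊗ g) ≫ μ : M ⊗ M ⟶ M. Then the BiHom-associativity and BiHom-unitality laws hold: (μ' ⊗ g) ≫ μ' = (α_{M,M,M}).hom ≫ (f ⊗ μ') ≫ μ' as morphisms (M ⊗ M) ⊗ M ⟶ M, (η ⊗ 𝟙 M) ≫ μ' = (λ_M).hom ≫ g, and (𝟙 M ⊗ η) ≫ μ' = (ρ_M).hom ≫ f. -/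
/-!
Multiplicativity of `f` and `g` pushes the outer twist of `μ' = (f ⊗ g) ≫ μ` inside, so the two
sides of BiHom-associativity become `μ` applied to `(f ≫ f) ⊗ (g ≫ f) ⊗ (g ≫ g)` and to
`(f ≫ f) ⊗ (f ≫ g) ⊗ (g ≫ g)` with the two bracketings; these agree because `f` and `g` commute
and `μ` is associative. Unitality holds because `f` and `g` fix `η`.
-/

open CategoryTheory MonoidalCategory

namespace CategoryTheory.MonObj

variable {C : Type*} [Category C] [MonoidalCategory C] {M : C} [MonObj M]

lemma tensorHom_comp_mul_comp {X Y : C} (a : X ⟶ M) (b : Y ⟶ M) {h : M ⟶ M}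
    (hh : (h ⊗ₘ h) ≫ μ = μ ≫ h) : (a ⊗ₘ b) ≫ μ ≫ h = (a ≫ h ⊗ₘ b ≫ h) ≫ μ := by
  rw [← hh, tensorHom_comp_tensorHom_assoc]

lemma mul_assoc_tensorHom {X Y Z : C} (a : X ⟶ M) (b : Y ⟶ M) (c : Z ⟶ M) :
    ((a ⊗ₘ b) ≫ μ ⊗ₘ c) ≫ μ = (α_ X Y Z).hom ≫ (a ⊗ₘ (b ⊗ₘ c) ≫ μ) ≫ μ := by
  have split : (a ⊗ₘ (b ⊗ₘ c) ≫ μ) = (a ⊗ₘ (b ⊗ₘ c)) ≫ M ◁ μ := by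
    rw [← id_tensorHom, tensorHom_comp_tensorHom, Category.comp_id]
  rw [split, Category.assoc, ← associator_naturality_assoc, ← MonObj.mul_assoc, ← tensorHom_id,
    tensorHom_comp_tensorHom_assoc, Category.comp_id]

def yauTwist (f g : M ⟶ M) : M ⊗ M ⟶ M := (f ⊗ₘ g) ≫ μ

variable {f g : M ⟶ M}

lemma yauTwist_assoc (hf : (f ⊗ₘ f) ≫ μ = μ ≫ f) (hg : (g ⊗ₘ g) ≫ μ = μ ≫ g)
    (hfg : f ≫ g = g ≫ f) :
    (yauTwist f g ⊗ₘ g) ≫ yauTwist f g =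
      (α_ M M M).hom ≫ (f ⊗ₘ yauTwist f g) ≫ yauTwist f g := by
  simp only [yauTwist]
  rw [tensorHom_comp_tensorHom_assoc, tensorHom_comp_tensorHom_assoc, Category.assoc,
    Category.assoc, tensorHom_comp_mul_comp _ _ hf, tensorHom_comp_mul_comp _ _ hg,
    mul_assoc_tensorHom, hfg]

lemma one_tensorHom_id_comp_yauTwist (hf : η ≫ f = η) :
    (η ⊗ₘ 𝟙 M) ≫ yauTwist f g = (λ_ M).hom ≫ g := by
  rw [yauTwist, tensorHom_comp_tensorHom_assoc, hf, Category.id_comp]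
  simp [tensorHom_def']

lemma id_tensorHom_one_comp_yauTwist (hg : η ≫ g = η) :
    (𝟙 M ⊗ₘ η) ≫ yauTwist f g = (ρ_ M).hom ≫ f := by
  rw [yauTwist, tensorHom_comp_tensorHom_assoc, hg, Category.id_comp]
  simp

end CategoryTheory.MonObj

theorem stmt_17 {C : Type*} [Category C] [MonoidalCategory C]
    (M : Mon C) (f g : M.X ⟶ M.X)
    (hfm : (f ⊗ₘ f) ≫ M.mon.mul = M.mon.mul ≫ f) (hfo : M.mon.one ≫ f = M.mon.one)
    (hgm : (g ⊗ₘ g) ≫ M.mon.mul = M.mon.mul ≫ g) (hgo : M.mon.one ≫ g = M.mon.one)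
    (hfg : f ≫ g = g ≫ f) :
    ((((f ⊗ₘ g) ≫ M.mon.mul) ⊗ₘ g) ≫ ((f ⊗ₘ g) ≫ M.mon.mul) =
        (α_ M.X M.X M.X).hom ≫ (f ⊗ₘ ((f ⊗ₘ g) ≫ M.mon.mul)) ≫ ((f ⊗ₘ g) ≫ M.mon.mul)) ∧
    ((M.mon.one ⊗ₘ 𝟙 M.X) ≫ ((f ⊗ₘ g) ≫ M.mon.mul) = (λ_ M.X).hom ≫ g) ∧
    ((𝟙 M.X ⊗ₘ M.mon.one) ≫ ((f ⊗ₘ g) ≫ M.mon.mul) = (ρ_ M.X).hom ≫ f) :=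
  ⟨MonObj.yauTwist_assoc hfm hgm hfg, MonObj.one_tensorHom_id_comp_yauTwist hfo,
    MonObj.id_tensorHom_one_comp_yauTwist hgo⟩
end

section
/- Let (A, m, α, β, e) be a unital BiHom-monoid in which α and β are bijective. Then the unit of the associated monoid (A, *, e) with x * y := m (α⁻¹ x) (β⁻¹ y) is unique, α and β are monoid endomorphisms of (A, *, e), and m is recovered as m x y = (α x) * (β y). -/
theorem stmt_19 {A : Type*} (m : A → A → A) (α β : A → A) (e : A)
    (h : IsUnitalBiHomMonoid m α β e)
    (α' β' : A → A)
    (hα'l : Function.LeftInverse α' α) (hα'r : Function.RightInverse α' α)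
    (hβ'l : Function.LeftInverse β' β) (hβ'r : Function.RightInverse β' β) :
    -- the unit of the monoid `x * y := m (α' x) (β' y)` is unique
    (∀ u : A, (∀ x, m (α' u) (β' x) = x) → (∀ x, m (α' x) (β' u) = x) → u = e) ∧
    -- `α` and `β` are monoid endomorphisms of `(A, *, e)`
    (∀ x y, α (m (α' x) (β' y)) = m (α' (α x)) (β' (α y))) ∧ α e = e ∧
    (∀ x y, β (m (α' x) (β' y)) = m (α' (β x)) (β' (β y))) ∧ β e = e ∧
    -- `m` is recovered as `m x y = (α x) * (β y)`
    (∀ x y, m x y = m (α' (α x)) (β' (β y))) := by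
  obtain ⟨⟨hcomm, hαm, hβm, _⟩, hαe, hβe, hel, her⟩ := h
  have hcomm' : ∀ x, α (β x) = β (α x) := fun x => congrFun hcomm x
  -- commuting with inverses
  have hαβ' : ∀ x, α (β' x) = β' (α x) := fun x => by
    have : β (α (β' x)) = α x := by rw [← hcomm' (β' x), hβ'r]
    calc α (β' x) = β' (β (α (β' x))) := (hβ'l _).symm
    _ = β' (α x) := by rw [this]
  have hβα' : ∀ x, β (α' x) = α' (β x) := fun x => by
    have : α (β (α' x)) = β x := by rw [hcomm' (α' x), hα'r]
    calc β (α' x) = α' (α (β (α' x))) := (hα'l _).symm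
    _ = α' (β x) := by rw [this]
  have hβ'e : β' e = e := by conv_lhs => rw [← hβe, hβ'l]
  refine ⟨?_, ?_, hαe, ?_, hβe, ?_⟩
  · intro u hu _
    have := hu e
    rw [hβ'e, her, hα'r] at this
    exact this
  · intro x y
    rw [hαm, hα'r, hα'l, hαβ']
  · intro x y
    rw [hβm, hβ'r, hβ'l, hβα']
  · intro x y
    rw [hα'l, hβ'l]
end
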